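/- Let S be a nonempty finite set, T : S → S → ℝ a row-stochastic matrix with limiting matrix Π := lim_{t→∞} (1/t) Σ_{k=0}^{t-1} T^k, and let r : S → ℝ be any vector (charge). Define g := Π r and h := (I − T + Π)^{-1} (I − Π) r. Then the pair (g, h) solves the Poisson equation with charge r: g = T g and g + h − T h = r. -/

import Mathlib

/-!
Let `A t = t⁻¹ ∑_{k<t} T^k`. Telescoping gives `A t (T - 1) = (T - 1) A t = t⁻¹ (T^t - 1)`, and
`t⁻¹ T^t = ((t + 1)/t) A (t + 1) - A t → 0`, so `P T = T P = P`; averaging `P T^k = P` gives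
`P² = P`. If `(1 - T + P) X = 0`, multiplying by `P` gives `P X = 0`, hence `T X = X` and so
`X = P X = 0`. Thus `Z = (1 - T + P)⁻¹` exists, `P Z = P` and `(1 - T) Z = 1 - P`, whence
`g + (1 - T) h = P r + (1 - P)² r = r`.
-/

open Filter Topology

section CesaroMean

variable {A : Type*} [Ring A] [Algebra ℝ A]

noncomputable def cesaroMean (T : A) (t : ℕ) : A := (t : ℝ)⁻¹ • ∑ k ∈ Finset.range t, T ^ k

theorem cesaroMean_mul_sub_one (T : A) (t : ℕ) :
    cesaroMean T t * (T - 1) = (t : ℝ)⁻¹ • (T ^ t - 1) := by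
  rw [cesaroMean, smul_mul_assoc, geom_sum_mul]

theorem sub_one_mul_cesaroMean (T : A) (t : ℕ) :
    (T - 1) * cesaroMean T t = (t : ℝ)⁻¹ • (T ^ t - 1) := by
  rw [cesaroMean, mul_smul_comm, mul_geom_sum]

theorem mul_cesaroMean_eq_of_mul_eq {T X : A} (hX : X * T = X) {t : ℕ} (ht : t ≠ 0) :
    X * cesaroMean T t = X := by
  have hpow (k : ℕ) : X * T ^ k = X := by
    induction k with
    | zero => rw [pow_zero, mul_one]
    | succ k ih => rw [pow_succ, ← mul_assoc, ih, hX]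
  rw [cesaroMean, mul_smul_comm, Finset.mul_sum, Finset.sum_congr rfl fun k _ => hpow k,
    Finset.sum_const, Finset.card_range, ← Nat.cast_smul_eq_nsmul ℝ, smul_smul,
    inv_mul_cancel₀ (Nat.cast_ne_zero.2 ht), one_smul]

theorem cesaroMean_mul_eq_of_mul_eq {T X : A} (hX : T * X = X) {t : ℕ} (ht : t ≠ 0) :
    cesaroMean T t * X = X := by
  have hpow (k : ℕ) : T ^ k * X = X := by
    induction k with
    | zero => rw [pow_zero, one_mul]
    | succ k ih => rw [pow_succ', mul_assoc, ih, hX]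
  rw [cesaroMean, smul_mul_assoc, Finset.sum_mul, Finset.sum_congr rfl fun k _ => hpow k,
    Finset.sum_const, Finset.card_range, ← Nat.cast_smul_eq_nsmul ℝ, smul_smul,
    inv_mul_cancel₀ (Nat.cast_ne_zero.2 ht), one_smul]

variable [TopologicalSpace A] [IsTopologicalRing A] {T P : A}

theorem mul_cesaroLimit_of_mul_eq [T2Space A] (hP : Tendsto (cesaroMean T) atTop (𝓝 P)) {X : A}
    (hX : X * T = X) : X * P = X :=
  tendsto_nhds_unique (hP.const_mul X) <| tendsto_const_nhds.congr' <|
    (eventually_ne_atTop 0).mono fun _ ht => (mul_cesaroMean_eq_of_mul_eq hX ht).symm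

theorem cesaroLimit_mul_of_mul_eq [T2Space A] (hP : Tendsto (cesaroMean T) atTop (𝓝 P)) {X : A}
    (hX : T * X = X) : P * X = X :=
  tendsto_nhds_unique (hP.mul_const X) <| tendsto_const_nhds.congr' <|
    (eventually_ne_atTop 0).mono fun _ ht => (cesaroMean_mul_eq_of_mul_eq hX ht).symm

variable [ContinuousSMul ℝ A]

theorem tendsto_inv_smul_pow_of_tendsto_cesaroMean
    (hP : Tendsto (cesaroMean T) atTop (𝓝 P)) :
    Tendsto (fun t : ℕ => (t : ℝ)⁻¹ • T ^ t) atTop (𝓝 0) := by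
  have hratio : Tendsto (fun t : ℕ => ((t : ℝ) + 1) / t) atTop (𝓝 1) := by
    have h : Tendsto (fun t : ℕ => 1 + (t : ℝ)⁻¹) atTop (𝓝 1) := by
      simpa using tendsto_const_nhds.add (tendsto_inv_atTop_nhds_zero_nat (𝕜 := ℝ))
    refine h.congr' ?_
    filter_upwards [eventually_ne_atTop 0] with t ht
    field_simp
  have hsucc : Tendsto (fun t : ℕ => (t : ℝ)⁻¹ • ∑ k ∈ Finset.range (t + 1), T ^ k)
      atTop (𝓝 P) := by
    have h := hratio.smul (hP.comp (tendsto_add_atTop_nat 1))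
    rw [one_smul] at h
    refine h.congr fun t => ?_
    simp only [Function.comp_apply, cesaroMean, smul_smul, Nat.cast_add, Nat.cast_one]
    congr 1
    field_simp
  simpa [cesaroMean, Finset.sum_range_succ, smul_add] using hsucc.sub hP

theorem tendsto_inv_smul_pow_sub_one_of_tendsto_cesaroMean
    (hP : Tendsto (cesaroMean T) atTop (𝓝 P)) :
    Tendsto (fun t : ℕ => (t : ℝ)⁻¹ • (T ^ t - 1)) atTop (𝓝 0) := by
  simp_rw [smul_sub]
  simpa using (tendsto_inv_smul_pow_of_tendsto_cesaroMean hP).sub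
    ((tendsto_inv_atTop_nhds_zero_nat (𝕜 := ℝ)).smul_const (1 : A))

variable [T2Space A]

theorem cesaroLimit_mul_eq (hP : Tendsto (cesaroMean T) atTop (𝓝 P)) : P * T = P := by
  rw [← sub_eq_zero, ← mul_sub_one]
  refine tendsto_nhds_unique (hP.mul_const (T - 1)) ?_
  simpa only [cesaroMean_mul_sub_one] using tendsto_inv_smul_pow_sub_one_of_tendsto_cesaroMean hP

theorem mul_cesaroLimit_eq (hP : Tendsto (cesaroMean T) atTop (𝓝 P)) : T * P = P := by
  rw [← sub_eq_zero, ← sub_one_mul]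
  refine tendsto_nhds_unique (hP.const_mul (T - 1)) ?_
  simpa only [sub_one_mul_cesaroMean] using tendsto_inv_smul_pow_sub_one_of_tendsto_cesaroMean hP

theorem cesaroLimit_mul_self (hP : Tendsto (cesaroMean T) atTop (𝓝 P)) : P * P = P :=
  mul_cesaroLimit_of_mul_eq hP (cesaroLimit_mul_eq hP)

theorem cesaroLimit_mul_one_sub_add (hP : Tendsto (cesaroMean T) atTop (𝓝 P)) :
    P * (1 - T + P) = P := by
  rw [mul_add, mul_sub, mul_one, cesaroLimit_mul_eq hP, cesaroLimit_mul_self hP, sub_self,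
    zero_add]

theorem eq_zero_of_one_sub_add_cesaroLimit_mul_eq_zero
    (hP : Tendsto (cesaroMean T) atTop (𝓝 P)) {X : A} (hX : (1 - T + P) * X = 0) : X = 0 := by
  have hPX : P * X = 0 := by rw [← cesaroLimit_mul_one_sub_add hP, mul_assoc, hX, mul_zero]
  have hTX : T * X = X := by
    rw [add_mul, hPX, add_zero, sub_mul, one_mul, sub_eq_zero] at hX
    exact hX.symm
  rw [← cesaroLimit_mul_of_mul_eq hP hTX, hPX]

theorem one_sub_mul_inverse_mul_one_sub (hP : Tendsto (cesaroMean T) atTop (𝓝 P))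
    (hM : IsUnit (1 - T + P)) : (1 - T) * Ring.inverse (1 - T + P) * (1 - P) = 1 - P := by
  have hPZ : P * Ring.inverse (1 - T + P) = P :=
    calc P * Ring.inverse (1 - T + P) = P * (1 - T + P) * Ring.inverse (1 - T + P) := by
          rw [cesaroLimit_mul_one_sub_add hP]
      _ = P := by rw [mul_assoc, Ring.mul_inverse_cancel _ hM, mul_one]
  calc (1 - T) * Ring.inverse (1 - T + P) * (1 - P)
      = ((1 - T + P) - P) * Ring.inverse (1 - T + P) * (1 - P) := by rw [add_sub_cancel_right]
    _ = 1 - P := by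
      rw [sub_mul, Ring.mul_inverse_cancel _ hM, hPZ, sub_mul, one_mul, mul_sub, mul_one,
        cesaroLimit_mul_self hP, sub_self, sub_zero]

end CesaroMean

theorem Matrix.isUnit_one_sub_add_of_tendsto_cesaroMean {S : Type*} [Fintype S] [DecidableEq S]
    {T P : Matrix S S ℝ} (hP : Tendsto (cesaroMean T) atTop (𝓝 P)) : IsUnit (1 - T + P) :=
  mulVec_injective_iff_isUnit.1 <| isLeftRegular_iff_mulVec_injective.1 <|
    isLeftRegular_iff_right_eq_zero_of_mul.2 fun _ =>
      eq_zero_of_one_sub_add_cesaroLimit_mul_eq_zero hP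

theorem poisson_equation_solution_general {S : Type*} [Fintype S] [DecidableEq S]
    (T P : Matrix S S ℝ)
    (hP : ∀ s s' : S,
      Tendsto (fun t : ℕ => (t : ℝ)⁻¹ * ∑ k ∈ Finset.range t, (T ^ k) s s')
        atTop (nhds (P s s')))
    (r : S → ℝ) :
    P.mulVec r = T.mulVec (P.mulVec r) ∧
    P.mulVec r + (1 - T + P)⁻¹.mulVec ((1 - P).mulVec r)
      - T.mulVec ((1 - T + P)⁻¹.mulVec ((1 - P).mulVec r)) = r := by
  have hP' : Tendsto (cesaroMean T) atTop (𝓝 P) :=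
    tendsto_pi_nhds.2 fun s => tendsto_pi_nhds.2 fun s' => by
      simpa only [cesaroMean, Matrix.smul_apply, Matrix.sum_apply, smul_eq_mul] using hP s s'
  refine ⟨by rw [Matrix.mulVec_mulVec, mul_cesaroLimit_eq hP'], ?_⟩
  have hZ := one_sub_mul_inverse_mul_one_sub hP'
    (Matrix.isUnit_one_sub_add_of_tendsto_cesaroMean hP')
  rw [← Matrix.nonsing_inv_eq_ringInverse, sub_mul, one_mul, sub_mul, mul_assoc] at hZ
  rw [Matrix.mulVec_mulVec, Matrix.mulVec_mulVec, add_sub_assoc, ← Matrix.sub_mulVec,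
    ← Matrix.add_mulVec, hZ, add_sub_cancel, Matrix.one_mulVec]

/-- **A solution to the Poisson equation.**
Let `P` be the limiting (Cesaro) matrix of a row-stochastic matrix `T` and `r` any charge.
Then `g := P r` and `h := (I - T + P)⁻¹ (I - P) r` solve the Poisson equation:
`g = T g` and `g + h - T h = r`. -/
theorem poisson_equation_solution {S : Type*} [Fintype S] [Nonempty S] [DecidableEq S]
    (T P : Matrix S S ℝ)
    (hnn : ∀ s s', 0 ≤ T s s') (hrow : ∀ s, ∑ s', T s s' = 1)
    (hP : ∀ s s' : S,
      Tendsto (fun t : ℕ => (t : ℝ)⁻¹ * ∑ k ∈ Finset.range t, (T ^ k) s s')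
        atTop (nhds (P s s')))
    (r : S → ℝ) :
    P.mulVec r = T.mulVec (P.mulVec r) ∧
    P.mulVec r + (1 - T + P)⁻¹.mulVec ((1 - P).mulVec r)
      - T.mulVec ((1 - T + P)⁻¹.mulVec ((1 - P).mulVec r)) = r :=
  poisson_equation_solution_general T P hP r
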